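/- arXiv:2503.23276 — 10 statements merged into one kernel-verified Lean document; each statement's English description precedes it below -/
import Mathlib

section
/- A sequence σ : ℕ → ℂ is Lipschitz continuous with respect to the sqrt-distance ρ(j,k) = |√j - √k| if and only if sup_{n ∈ ℕ} √(n+1) · |σ(n+1) - σ(n)| < ∞. -/
/-!
The distance `ρ` is pulled back along the monotone map `n ↦ √n`, so by telescoping `σ` is
`ρ`-Lipschitz exactly when `‖σ (n + 1) - σ n‖ ≤ L (√(n + 1) - √n)` for all `n`. The theorem then
follows from `√(n + 1) - √n = 1 / (√(n + 1) + √n)`, which lies between `1 / (2√(n + 1))` and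
`1 / √(n + 1)`.
-/

open Finset

section Lipschitz

variable {α E : Type*} [SeminormedAddCommGroup E]

theorem exists_div_abs_sub_le_iff_exists_le_mul_abs_sub (σ : α → E) {g : α → ℝ}
    (hg : Function.Injective g) :
    (∃ L : ℝ, ∀ j k, j ≠ k → ‖σ j - σ k‖ / |g j - g k| ≤ L) ↔
      ∃ L : ℝ, ∀ j k, ‖σ j - σ k‖ ≤ L * |g j - g k| := by
  refine exists_congr fun L => ⟨fun h j k => ?_, fun h j k hjk => ?_⟩
  · rcases eq_or_ne j k with rfl | hjk
    · simp
    · have hpos : 0 < |g j - g k| := abs_pos.2 (sub_ne_zero.2 (hg.ne hjk))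
      rw [← div_le_iff₀ hpos]
      exact h j k hjk
  · have hpos : 0 < |g j - g k| := abs_pos.2 (sub_ne_zero.2 (hg.ne hjk))
    rw [div_le_iff₀ hpos]
    exact h j k

theorem norm_sub_le_mul_sub_of_norm_succ_sub_le (σ : ℕ → E) {g : ℕ → ℝ} {L : ℝ}
    (h : ∀ n, ‖σ (n + 1) - σ n‖ ≤ L * (g (n + 1) - g n)) {k j : ℕ} (hkj : k ≤ j) :
    ‖σ j - σ k‖ ≤ L * (g j - g k) := by
  rw [← dist_eq_norm', ← sum_Ico_sub g hkj, mul_sum]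
  exact dist_le_Ico_sum_of_dist_le hkj fun _ _ => (dist_eq_norm' _ _).trans_le (h _)

theorem exists_le_mul_abs_sub_iff_exists_norm_succ_sub_le (σ : ℕ → E) {g : ℕ → ℝ}
    (hg : Monotone g) :
    (∃ L : ℝ, ∀ j k, ‖σ j - σ k‖ ≤ L * |g j - g k|) ↔
      ∃ L : ℝ, ∀ n, ‖σ (n + 1) - σ n‖ ≤ L * (g (n + 1) - g n) := by
  have habs {k j : ℕ} (hkj : k ≤ j) : |g j - g k| = g j - g k :=
    abs_of_nonneg (sub_nonneg.2 (hg hkj))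
  refine exists_congr fun L => ⟨fun h n => ?_, fun h j k => ?_⟩
  · simpa only [habs n.le_succ] using h (n + 1) n
  · rcases le_total k j with hkj | hjk
    · rw [habs hkj]
      exact norm_sub_le_mul_sub_of_norm_succ_sub_le σ h hkj
    · rw [norm_sub_rev, abs_sub_comm, habs hjk]
      exact norm_sub_le_mul_sub_of_norm_succ_sub_le σ h hjk

end Lipschitz

theorem mul_sub_le_sq_sub_sq {a b : ℝ} (hb : 0 ≤ b) (hba : b ≤ a) :
    a * (a - b) ≤ a ^ 2 - b ^ 2 := by
  nlinarith

theorem sq_sub_sq_le_two_mul_mul_sub (a b : ℝ) : a ^ 2 - b ^ 2 ≤ 2 * a * (a - b) := by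
  nlinarith [sq_nonneg (a - b)]

namespace Real

theorem sqrt_add_one_mul_sub_sqrt_le_one {x : ℝ} (hx : 0 ≤ x) :
    √(x + 1) * (√(x + 1) - √x) ≤ 1 := by
  have h := mul_sub_le_sq_sub_sq (sqrt_nonneg x) (sqrt_le_sqrt (le_add_of_nonneg_right zero_le_one))
  rwa [sq_sqrt hx, sq_sqrt (by positivity), add_sub_cancel_left] at h

theorem one_le_two_mul_sqrt_add_one_mul_sub_sqrt {x : ℝ} (hx : 0 ≤ x) :
    1 ≤ 2 * √(x + 1) * (√(x + 1) - √x) := by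
  have h := sq_sub_sq_le_two_mul_mul_sub √(x + 1) √x
  rwa [sq_sqrt hx, sq_sqrt (by positivity), add_sub_cancel_left] at h

theorem exists_le_mul_sqrt_succ_sub_iff {a : ℕ → ℝ} (ha : ∀ n, 0 ≤ a n) :
    (∃ L : ℝ, ∀ n : ℕ, a n ≤ L * (√(n + 1) - √n)) ↔
      ∃ M : ℝ, ∀ n : ℕ, √(n + 1) * a n ≤ M := by
  constructor
  · rintro ⟨L, hL⟩
    refine ⟨max L 0, fun n => ?_⟩
    have hd : 0 ≤ √(n + 1) - √n := sub_nonneg.2 (sqrt_le_sqrt (by linarith))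
    calc √(n + 1) * a n ≤ √(n + 1) * (max L 0 * (√(n + 1) - √n)) := by
          gcongr
          exact (hL n).trans (by gcongr; exact le_max_left L 0)
      _ = max L 0 * (√(n + 1) * (√(n + 1) - √n)) := by ring
      _ ≤ max L 0 * 1 := by gcongr; exact sqrt_add_one_mul_sub_sqrt_le_one n.cast_nonneg
      _ = max L 0 := mul_one _
  · rintro ⟨M, hM⟩
    refine ⟨2 * max M 0, fun n => ?_⟩
    have hd : 0 ≤ √(n + 1) - √n := sub_nonneg.2 (sqrt_le_sqrt (by linarith))
    calc a n ≤ a n * (2 * √(n + 1) * (√(n + 1) - √n)) :=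
          le_mul_of_one_le_right (ha n) (one_le_two_mul_sqrt_add_one_mul_sub_sqrt n.cast_nonneg)
      _ = 2 * (√(n + 1) - √n) * (√(n + 1) * a n) := by ring
      _ ≤ 2 * (√(n + 1) - √n) * max M 0 := by gcongr; exact (hM n).trans (le_max_left M 0)
      _ = 2 * max M 0 * (√(n + 1) - √n) := by ring

end Real

theorem lipschitz_sqrt_dist_iff (σ : ℕ → ℂ) :
    (∃ L : ℝ, ∀ j k : ℕ, j ≠ k →
      ‖σ j - σ k‖ / |Real.sqrt j - Real.sqrt k| ≤ L) ↔
    (∃ M : ℝ, ∀ n : ℕ,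
      Real.sqrt (n + 1) * ‖σ (n + 1) - σ n‖ ≤ M) := by
  have hinj : Function.Injective fun n : ℕ => √(n : ℝ) := fun j k h =>
    Nat.cast_injective ((Real.sqrt_inj j.cast_nonneg k.cast_nonneg).1 h)
  have hmono : Monotone fun n : ℕ => √(n : ℝ) := fun j k h =>
    Real.sqrt_le_sqrt (Nat.cast_le.2 h)
  rw [exists_div_abs_sub_le_iff_exists_le_mul_abs_sub σ hinj,
    exists_le_mul_abs_sub_iff_exists_norm_succ_sub_le σ hmono]
  push_cast
  exact Real.exists_le_mul_sqrt_succ_sub_iff fun n => norm_nonneg _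
end

section
/- The sequence σ(j) = √|sin(π√j)| satisfies |σ(j) - σ(k)| ≤ √(π · ρ(j,k)) for all j, k ∈ ℕ, where ρ(j,k) = |√j - √k|; i.e., σ is 1/2-Hölder continuous with respect to the sqrt-distance. -/
open Real

lemma sqrt_add_le' (x y : ℝ) (hx : 0 ≤ x) (hy : 0 ≤ y) :
    Real.sqrt (x + y) ≤ Real.sqrt x + Real.sqrt y := by
  rw [show Real.sqrt x + Real.sqrt y = Real.sqrt ((Real.sqrt x + Real.sqrt y) ^ 2) by
    rw [Real.sqrt_sq (by positivity)]]
  apply Real.sqrt_le_sqrt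
  nlinarith [Real.sq_sqrt hx, Real.sq_sqrt hy, Real.sqrt_nonneg x, Real.sqrt_nonneg y]

lemma sqrt_holder (a b : ℝ) (ha : 0 ≤ a) (hb : 0 ≤ b) :
    |Real.sqrt a - Real.sqrt b| ≤ Real.sqrt |a - b| := by
  have key : ∀ x y : ℝ, 0 ≤ x → 0 ≤ y →
      Real.sqrt x - Real.sqrt y ≤ Real.sqrt |x - y| := by
    intro x y hx hy
    have h1 : x ≤ |x - y| + y := by
      cases abs_cases (x - y) with
      | inl h => linarith [h.1]
      | inr h => linarith [h.1]
    calc Real.sqrt x - Real.sqrt y ≤ Real.sqrt (|x - y| + y) - Real.sqrt y := by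
          linarith [Real.sqrt_le_sqrt h1]
      _ ≤ Real.sqrt |x - y| := by
          linarith [sqrt_add_le' |x - y| y (abs_nonneg _) hy]
  rw [abs_sub_le_iff]
  constructor
  · exact key a b ha hb
  · rw [abs_sub_comm] at *; exact key b a hb ha

lemma sin_lip (x y : ℝ) : |Real.sin x - Real.sin y| ≤ |x - y| := by
  rw [Real.sin_sub_sin]
  rw [abs_mul, abs_mul]
  have h1 : |Real.sin ((x - y) / 2)| ≤ |(x - y) / 2| := Real.abs_sin_le_abs
  have h2 : |Real.cos ((x + y) / 2)| ≤ 1 := Real.abs_cos_le_one _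
  have h3 : |(x - y) / 2| = |x - y| / 2 := by rw [abs_div]; norm_num
  rw [h3] at h1
  have h4 : |(2:ℝ)| = 2 := by norm_num
  rw [h4]
  nlinarith [abs_nonneg (Real.sin ((x - y) / 2)), abs_nonneg (x - y),
    abs_nonneg (Real.cos ((x + y) / 2))]

theorem holder_half_sin_pi_sqrt (j k : ℕ) :
    |Real.sqrt (|Real.sin (Real.pi * Real.sqrt j)|) -
      Real.sqrt (|Real.sin (Real.pi * Real.sqrt k)|)| ≤
    Real.sqrt (Real.pi * |Real.sqrt j - Real.sqrt k|) := by
  calc |Real.sqrt (|Real.sin (Real.pi * Real.sqrt j)|) -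
      Real.sqrt (|Real.sin (Real.pi * Real.sqrt k)|)|
      ≤ Real.sqrt (|(|Real.sin (Real.pi * Real.sqrt j)|) - (|Real.sin (Real.pi * Real.sqrt k)|)|) :=
        sqrt_holder _ _ (abs_nonneg _) (abs_nonneg _)
    _ ≤ Real.sqrt (Real.pi * |Real.sqrt j - Real.sqrt k|) := by
        apply Real.sqrt_le_sqrt
        calc |(|Real.sin (Real.pi * Real.sqrt j)|) - (|Real.sin (Real.pi * Real.sqrt k)|)|
            ≤ |Real.sin (Real.pi * Real.sqrt j) - Real.sin (Real.pi * Real.sqrt k)| :=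
              abs_abs_sub_abs_le_abs_sub _ _
          _ ≤ |Real.pi * Real.sqrt j - Real.pi * Real.sqrt k| := sin_lip _ _
          _ = Real.pi * |Real.sqrt j - Real.sqrt k| := by
              rw [← mul_sub, abs_mul, abs_of_pos Real.pi_pos]
end

section
/- The sequence σ(j) = √|sin(π√j)| is not Lipschitz continuous with respect to the sqrt-distance ρ(j,k) = |√j - √k|: in fact, sup_{n ∈ ℕ} √(n+1)·|σ(n+1) - σ(n)| = +∞. -/
open Real

private lemma key_bound (k : ℕ) (hk : 1 ≤ k) :
    Real.sqrt ((k^2 : ℕ) + 1) *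
      |Real.sqrt (|Real.sin (Real.pi * Real.sqrt ((k^2 : ℕ) + 1))|) -
        Real.sqrt (|Real.sin (Real.pi * Real.sqrt (k^2 : ℕ))|)| ≥
    Real.sqrt ((k : ℝ) / 2) := by
  have hk1 : (1 : ℝ) ≤ (k : ℝ) := by exact_mod_cast hk
  have hc : ((k^2 : ℕ) : ℝ) = (k : ℝ)^2 := by push_cast; ring
  rw [hc]
  -- σ(k²) = 0
  have h0 : Real.sqrt ((k:ℝ)^2) = (k:ℝ) := Real.sqrt_sq (by positivity)
  have hsin0 : Real.sin (Real.pi * Real.sqrt ((k:ℝ)^2)) = 0 := by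
    rw [h0, mul_comm]; exact Real.sin_nat_mul_pi k
  rw [hsin0]
  simp only [abs_zero, Real.sqrt_zero, sub_zero]
  set s := Real.sqrt ((k:ℝ)^2 + 1) with hs
  have hsq : s^2 = (k:ℝ)^2 + 1 := Real.sq_sqrt (by positivity)
  have hsnn : 0 ≤ s := Real.sqrt_nonneg _
  have hsget : (k:ℝ) < s := by nlinarith
  have hshi : s ≤ (k:ℝ) + 1/2 := by nlinarith
  set t := s - (k:ℝ) with ht
  have ht0 : 0 < t := by simp only [ht]; linarith
  have ht2 : t ≤ 1/2 := by simp only [ht]; linarith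
  have htlo : 1 ≤ t * (2*((k:ℝ)+1)) := by
    have : t * (s + (k:ℝ)) = 1 := by rw [ht]; nlinarith
    nlinarith
  -- decompose sin(π s)
  have hdecomp : |Real.sin (Real.pi * s)| = Real.sin (Real.pi * t) := by
    have he : Real.pi * s = (k:ℝ) * Real.pi + Real.pi * t := by rw [ht]; ring
    rw [he, Real.sin_add, Real.sin_nat_mul_pi, zero_mul, zero_add, abs_mul]
    have hck : |Real.cos ((k:ℝ) * Real.pi)| = 1 := by
      exact_mod_cast Real.abs_cos_int_mul_pi (k : ℤ)
    rw [hck, one_mul, abs_of_nonneg]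
    apply Real.sin_nonneg_of_nonneg_of_le_pi
    · positivity
    · nlinarith [Real.pi_pos]
  rw [hdecomp]
  -- lower bound sin(π t) ≥ 2 t ≥ 1/(k+1)
  have hsinlo : 2 * t ≤ Real.sin (Real.pi * t) := by
    have h := Real.mul_le_sin (x := Real.pi * t) (by positivity)
      (by nlinarith [Real.pi_pos])
    have hπ : Real.pi ≠ 0 := Real.pi_ne_zero
    calc 2 * t = 2 / Real.pi * (Real.pi * t) := by field_simp
    _ ≤ _ := h
  have hk1' : (0:ℝ) < (k:ℝ)+1 := by linarith
  have hsin_ge : 1/((k:ℝ)+1) ≤ Real.sin (Real.pi * t) := by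
    have h2t : 1/((k:ℝ)+1) ≤ 2 * t := by
      rw [div_le_iff₀ hk1']; nlinarith
    linarith
  have hsin_nn : 0 ≤ Real.sin (Real.pi * t) := by
    have : (0:ℝ) < 1/((k:ℝ)+1) := by positivity
    linarith
  rw [ge_iff_le]
  calc Real.sqrt ((k:ℝ)/2)
      ≤ Real.sqrt ((k:ℝ)^2 / ((k:ℝ)+1)) := by
        apply Real.sqrt_le_sqrt
        rw [div_le_div_iff₀ (by norm_num) hk1']
        nlinarith
    _ = (k:ℝ) * Real.sqrt (1/((k:ℝ)+1)) := by
        rw [show (k:ℝ)^2 / ((k:ℝ)+1) = (k:ℝ)^2 * (1/((k:ℝ)+1)) by ring,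
          Real.sqrt_mul (by positivity), Real.sqrt_sq (by positivity)]
    _ ≤ s * Real.sqrt (Real.sin (Real.pi * t)) :=
        mul_le_mul hsget.le (Real.sqrt_le_sqrt hsin_ge) (Real.sqrt_nonneg _)
          (by linarith)
    _ = s * |Real.sqrt (Real.sin (Real.pi * t))| := by
        rw [abs_of_nonneg (Real.sqrt_nonneg _)]

theorem not_lipschitz_sin_pi_sqrt :
    ∀ M : ℝ, ∃ n : ℕ,
      Real.sqrt (n + 1) *
        |Real.sqrt (|Real.sin (Real.pi * Real.sqrt (n + 1))|) -
          Real.sqrt (|Real.sin (Real.pi * Real.sqrt n)|)| > M := by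
  intro M
  set k : ℕ := ⌈2 * M^2⌉₊ + 1 with hkdef
  have hk : 1 ≤ k := Nat.le_add_left 1 _
  refine ⟨k^2, lt_of_lt_of_le ?_ (key_bound k hk)⟩
  have hkM : 2 * M^2 < (k:ℝ) := by
    calc 2 * M^2 ≤ (⌈2 * M^2⌉₊ : ℝ) := Nat.le_ceil _
    _ < (k:ℝ) := by exact_mod_cast Nat.lt_succ_self _
  calc M ≤ |M| := le_abs_self M
  _ = Real.sqrt (M^2) := (Real.sqrt_sq_eq_abs M).symm
  _ < Real.sqrt ((k:ℝ)/2) := Real.sqrt_lt_sqrt (by positivity) (by linarith)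
end

section
/- Let σ : ℕ → ℂ be bounded and δ ∈ (0,1). Define y(j) = (1/(1+r_j)) · Σ_{k=j}^{j+r_j} σ(k), where r_j = ⌊δ√j⌋. Then sup_{j ∈ ℕ} √(j+1)·|y(j+1) - y(j)| ≤ 4√2·‖σ‖_∞/δ; in particular y is Lipschitz continuous with respect to the sqrt-distance. -/
/-!
Let `r = ⌊δ√j⌋` and `s = ⌊δ√(j+1)⌋`. Since `√(j+1) ≤ √j + 1` and `δ ≤ 1`, the window length
grows by at most one: `r ≤ s ≤ r + 1`. Hence the two window sums differ by at most three
terms, and comparing their means costs another `M`, so the means differ by at most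
`4M/(r+1)`. Finally `δ√(j+1) ≤ √2 (r+1)`, which turns `√(j+1) · 4M/(r+1)` into `4√2 M/δ`.
-/

open Finset

section WindowSums

variable {E : Type*} [SeminormedAddCommGroup E] {f : ℕ → E} {M : ℝ}

lemma norm_sum_le_card_mul (s : Finset ℕ) (hf : ∀ n, ‖f n‖ ≤ M) :
    ‖∑ k ∈ s, f k‖ ≤ #s * M := by
  simpa using norm_sum_le_of_le s fun k _ => hf k

lemma sum_Icc_succ_sub_sum_Icc {r s : ℕ} (j : ℕ) (hrs : r ≤ s + 1) :
    ∑ k ∈ Icc (j + 1) (j + 1 + s), f k - ∑ k ∈ Icc j (j + r), f k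
      = ∑ k ∈ Ioc (j + r) (j + 1 + s), f k - f j := by
  rw [Icc_eq_cons_Ioc (Nat.le_add_right j r), sum_cons, Icc_add_one_left_eq_Ioc,
    ← sum_Ioc_consecutive _ (Nat.le_add_right j r) (by omega : j + r ≤ j + 1 + s)]
  abel

lemma norm_sum_Icc_succ_sub_sum_Icc_le {r s : ℕ} (hf : ∀ n, ‖f n‖ ≤ M) (j : ℕ)
    (hrs : r ≤ s) (hsr : s ≤ r + 1) :
    ‖∑ k ∈ Icc (j + 1) (j + 1 + s), f k - ∑ k ∈ Icc j (j + r), f k‖ ≤ 3 * M := by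
  have hM : 0 ≤ M := (norm_nonneg _).trans (hf 0)
  have hcard : (#(Ioc (j + r) (j + 1 + s)) : ℝ) ≤ 2 := by
    rw [Nat.card_Ioc]; exact_mod_cast (by omega : j + 1 + s - (j + r) ≤ 2)
  rw [sum_Icc_succ_sub_sum_Icc j (by omega)]
  calc _ ≤ ‖∑ k ∈ Ioc (j + r) (j + 1 + s), f k‖ + ‖f j‖ := norm_sub_le _ _
    _ ≤ 2 * M + M := by gcongr; exacts [(norm_sum_le_card_mul _ hf).trans (by gcongr), hf j]
    _ = 3 * M := by ring

end WindowSums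

section WindowMeans

variable {𝕜 : Type*} [RCLike 𝕜]

def windowMean (f : ℕ → 𝕜) (r j : ℕ) : 𝕜 :=
  1 / ((r : 𝕜) + 1) * ∑ k ∈ Icc j (j + r), f k

lemma norm_div_sub_div_le (x y : 𝕜) {p q : ℝ} (hp : 0 < p) (hpq : p ≤ q) :
    ‖x / q - y / p‖ ≤ ‖x - y‖ / p + (q - p) * ‖y‖ / (p * q) := by
  have hq : 0 < q := hp.trans_le hpq
  have hsplit : x / q - y / p = (x - y) / q + ((p - q : ℝ) : 𝕜) * y / (p * q) := by
    have : (q : 𝕜) ≠ 0 := by exact_mod_cast hq.ne'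
    have : (p : 𝕜) ≠ 0 := by exact_mod_cast hp.ne'
    push_cast; field_simp; ring
  rw [hsplit]
  refine (norm_add_le _ _).trans (add_le_add ?_ (le_of_eq ?_))
  · rw [norm_div, RCLike.norm_ofReal, abs_of_pos hq]
    exact div_le_div_of_nonneg_left (norm_nonneg _) hp hpq
  · rw [norm_div, norm_mul, ← RCLike.ofReal_mul, RCLike.norm_ofReal, RCLike.norm_ofReal,
      abs_of_pos (mul_pos hp hq), abs_of_nonpos (by linarith)]
    ring

lemma norm_windowMean_succ_sub_le {f : ℕ → 𝕜} {M : ℝ} (hf : ∀ n, ‖f n‖ ≤ M) {r s : ℕ}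
    (hrs : r ≤ s) (hsr : s ≤ r + 1) (j : ℕ) :
    ‖windowMean f s (j + 1) - windowMean f r j‖ ≤ 4 * M / (r + 1) := by
  have hM : 0 ≤ M := (norm_nonneg _).trans (hf 0)
  have hp : (0 : ℝ) < r + 1 := by positivity
  have hpq : (r : ℝ) + 1 ≤ s + 1 := by gcongr
  have hqp : (s : ℝ) + 1 - (r + 1) ≤ 1 := by
    have : (s : ℝ) ≤ r + 1 := by exact_mod_cast hsr
    linarith
  have hy : ‖∑ k ∈ Icc j (j + r), f k‖ ≤ (r + 1) * M := by
    have h := norm_sum_le_card_mul (Icc j (j + r)) hf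
    rwa [Nat.card_Icc, show j + r + 1 - j = r + 1 by omega, Nat.cast_succ] at h
  have h := norm_div_sub_div_le (∑ k ∈ Icc (j + 1) (j + 1 + s), f k)
    (∑ k ∈ Icc j (j + r), f k) hp hpq
  push_cast at h
  simp only [windowMean, one_div_mul_eq_div]
  refine h.trans ?_
  calc _ ≤ 3 * M / (r + 1) + 1 * ((r + 1) * M) / ((r + 1) * (s + 1)) := by
        gcongr
        exact norm_sum_Icc_succ_sub_sum_Icc_le hf j hrs hsr
    _ = 3 * M / (r + 1) + M / (s + 1) := by field_simp
    _ ≤ 4 * M / (r + 1) := by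
        rw [show 4 * M / (r + 1) = 3 * M / (r + 1) + M / (r + 1) by ring]
        gcongr

end WindowMeans

section FloorSqrt

open Real

variable {δ x : ℝ}

lemma sqrt_add_one_le (hx : 0 ≤ x) : √(x + 1) ≤ √x + 1 := by
  rw [sqrt_le_left (by positivity)]
  nlinarith [sq_sqrt hx, sqrt_nonneg x]

lemma floor_mul_sqrt_add_one_le (hδ0 : 0 ≤ δ) (hδ1 : δ ≤ 1) (hx : 0 ≤ x) :
    ⌊δ * √(x + 1)⌋₊ ≤ ⌊δ * √x⌋₊ + 1 := by
  rw [← Nat.floor_add_one (by positivity)]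
  apply Nat.floor_le_floor
  calc δ * √(x + 1) ≤ δ * (√x + 1) := by gcongr; exact sqrt_add_one_le hx
    _ ≤ δ * √x + 1 := by nlinarith

lemma mul_sqrt_add_one_le_sqrt_two_mul (hδ0 : 0 ≤ δ) (hδ1 : δ ≤ 1) (hx : 0 ≤ x) :
    δ * √(x + 1) ≤ √2 * (⌊δ * √x⌋₊ + 1) := by
  rcases le_total x 1 with hx1 | hx1
  · calc δ * √(x + 1) ≤ 1 * √2 := by gcongr; linarith
      _ ≤ √2 * (⌊δ * √x⌋₊ + 1) := by
          rw [one_mul]; exact le_mul_of_one_le_right (by positivity) (by simp)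
  · calc δ * √(x + 1) ≤ δ * (√2 * √x) := by
          rw [← sqrt_mul zero_le_two]; gcongr; linarith
      _ = √2 * (δ * √x) := by ring
      _ ≤ √2 * (⌊δ * √x⌋₊ + 1) := by gcongr; exact (Nat.lt_floor_add_one _).le

end FloorSqrt

theorem vallee_poussin_mean_lipschitz (σ : ℕ → ℂ) (M : ℝ)
    (hM : ∀ n, ‖σ n‖ ≤ M)
    (δ : ℝ) (hδ0 : 0 < δ) (hδ1 : δ < 1) :
    ∀ j : ℕ,
      Real.sqrt (j + 1) *
        ‖((1 / ((Nat.floor (δ * Real.sqrt (j + 1)) : ℂ) + 1)) *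
              ∑ k ∈ Finset.Icc (j + 1) (j + 1 + Nat.floor (δ * Real.sqrt (j + 1))), σ k
            - (1 / ((Nat.floor (δ * Real.sqrt j) : ℂ) + 1)) *
              ∑ k ∈ Finset.Icc j (j + Nat.floor (δ * Real.sqrt j)), σ k)‖
        ≤ 4 * Real.sqrt 2 * M / δ := by
  intro j
  have hM0 : 0 ≤ M := (norm_nonneg _).trans (hM 0)
  have hj : (0 : ℝ) ≤ j := j.cast_nonneg
  have hmean := norm_windowMean_succ_sub_le hM
    (Nat.floor_le_floor (by gcongr; linarith)) (floor_mul_sqrt_add_one_le hδ0.le hδ1.le hj) j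
  have hscale := mul_sqrt_add_one_le_sqrt_two_mul hδ0.le hδ1.le hj
  calc _ ≤ √(j + 1) * (4 * M / (⌊δ * √j⌋₊ + 1)) := by gcongr; exact hmean
    _ ≤ 4 * √2 * M / δ := by
        rw [mul_div_assoc', div_le_div_iff₀ (by positivity) hδ0]
        nlinarith [mul_le_mul_of_nonneg_left hscale (by positivity : 0 ≤ 4 * M)]
end

section
/- Every bounded sequence σ : ℕ → ℂ that is uniformly continuous with respect to the sqrt-distance ρ(j,k) = |√j - √k| can be uniformly approximated by bounded sequences that are Lipschitz continuous with respect to ρ: for every ε > 0 there exists a bounded ρ-Lipschitz sequence y with ‖σ - y‖_∞ < ε. -/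
/-!
A bounded function that is uniformly continuous is "Lipschitz at large scales": if distances
`≤ δ` change it by at most `e` and its oscillation is `D`, then `f` varies by at most
`e + (D / δ) · dist`. For a real function with this coarse Lipschitz bound, the inf-convolution
`x ↦ ⨅ y, g y + K · dist x y` is `K`-Lipschitz and lies between `g - e` and `g`. Applying this to
the real and imaginary parts gives the Lipschitz approximants.
-/

open NNReal Set

variable {X : Type*} [PseudoMetricSpace X]

lemma exists_dist_le_add_mul_of_forall_dist_le {Y : Type*} [PseudoMetricSpace Y] {f : X → Y}
    {D e δ : ℝ} (hδ : 0 < δ) (hD : ∀ x y, dist (f x) (f y) ≤ D)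
    (he : ∀ x y, dist x y ≤ δ → dist (f x) (f y) ≤ e) :
    ∃ K : ℝ≥0, ∀ x y, dist (f x) (f y) ≤ e + K * dist x y := by
  refine ⟨(D / δ).toNNReal, fun x y => ?_⟩
  have he₀ : 0 ≤ e := dist_nonneg.trans (he x x (by simpa using hδ.le))
  have hK : D / δ * dist x y ≤ (D / δ).toNNReal * dist x y :=
    mul_le_mul_of_nonneg_right (Real.le_coe_toNNReal _) dist_nonneg
  rcases le_or_gt (dist x y) δ with hxy | hxy
  · have : 0 ≤ ((D / δ).toNNReal : ℝ) * dist x y := by positivity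
    linarith [he x y hxy]
  · have : D ≤ D / δ * dist x y := by
      rw [div_mul_eq_mul_div, le_div_iff₀ hδ]
      exact mul_le_mul_of_nonneg_left hxy.le (dist_nonneg.trans (hD x y))
    linarith [hD x y]

lemma exists_lipschitzWith_abs_sub_le_of_le_add_mul {g : X → ℝ} {K : ℝ≥0} {e : ℝ}
    (h : ∀ x y, g x ≤ g y + e + K * dist x y) :
    ∃ v : X → ℝ, LipschitzWith K v ∧ ∀ x, |g x - v x| ≤ e := by
  set v : X → ℝ := fun x => ⨅ y, g y + K * dist x y
  have hbdd (x : X) : BddBelow (range fun y => g y + K * dist x y) :=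
    ⟨g x - e, by rintro _ ⟨y, rfl⟩; linarith [h x y]⟩
  have hv_le (x : X) : v x ≤ g x := by simpa using ciInf_le (hbdd x) x
  have hle_v (x : X) : g x - e ≤ v x :=
    have : Nonempty X := ⟨x⟩
    le_ciInf fun y => by linarith [h x y]
  refine ⟨v, LipschitzWith.of_le_add_mul K fun x y => ?_, fun x => ?_⟩
  · have : Nonempty X := ⟨x⟩
    rw [← sub_le_iff_le_add]
    refine le_ciInf fun z => ?_
    have hz : v x ≤ g z + K * dist x z := ciInf_le (hbdd x) z
    have := mul_le_mul_of_nonneg_left (dist_triangle x y z) K.coe_nonneg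
    linarith [mul_add (K : ℝ) (dist x y) (dist y z)]
  · rw [abs_le]
    constructor <;> linarith [hv_le x, hle_v x]

namespace Complex

lemma exists_lipschitzWith_norm_sub_le_of_dist_le_add_mul {f : X → ℂ} {K : ℝ≥0} {e : ℝ}
    (h : ∀ x y, dist (f x) (f y) ≤ e + K * dist x y) :
    ∃ g : X → ℂ, LipschitzWith (2 * K) g ∧ ∀ x, ‖f x - g x‖ ≤ 2 * e := by
  have hdist (z w : ℂ) : dist z w ≤ |z.re - w.re| + |z.im - w.im| := by
    simpa [dist_eq_norm] using norm_le_abs_re_add_abs_im (z - w)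
  have hnorm (x y : X) : ‖f x - f y‖ ≤ e + K * dist x y := dist_eq_norm (f x) (f y) ▸ h x y
  have hre (x y : X) : (f x).re ≤ (f y).re + e + K * dist x y := by
    have := (le_abs_self _).trans ((abs_re_le_norm (f x - f y)).trans (hnorm x y))
    linarith [sub_re (f x) (f y)]
  have him (x y : X) : (f x).im ≤ (f y).im + e + K * dist x y := by
    have := (le_abs_self _).trans ((abs_im_le_norm (f x - f y)).trans (hnorm x y))
    linarith [sub_im (f x) (f y)]
  obtain ⟨vr, hvr, hfvr⟩ := exists_lipschitzWith_abs_sub_le_of_le_add_mul hre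
  obtain ⟨vi, hvi, hfvi⟩ := exists_lipschitzWith_abs_sub_le_of_le_add_mul him
  refine ⟨fun x => ⟨vr x, vi x⟩, LipschitzWith.of_dist_le_mul fun x y => ?_, fun x => ?_⟩
  · calc dist (⟨vr x, vi x⟩ : ℂ) ⟨vr y, vi y⟩ ≤ |vr x - vr y| + |vi x - vi y| := hdist _ _
      _ ≤ K * dist x y + K * dist x y := by
        gcongr
        · exact (Real.dist_eq _ _).symm.le.trans (hvr.dist_le_mul x y)
        · exact (Real.dist_eq _ _).symm.le.trans (hvi.dist_le_mul x y)
      _ = ↑(2 * K) * dist x y := by push_cast; ring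
  · calc ‖f x - ⟨vr x, vi x⟩‖ ≤ |(f x).re - vr x| + |(f x).im - vi x| := by
          simpa [dist_eq_norm] using hdist (f x) ⟨vr x, vi x⟩
      _ ≤ 2 * e := by linarith [hfvr x, hfvi x]

end Complex

theorem lipschitz_dense_in_RO (σ : ℕ → ℂ)
    (hbdd : ∃ M : ℝ, ∀ n, ‖σ n‖ ≤ M)
    (huc : ∀ ε > 0, ∃ δ > 0, ∀ j k : ℕ,
      |Real.sqrt j - Real.sqrt k| ≤ δ → ‖σ j - σ k‖ < ε) :
    ∀ ε > 0, ∃ y : ℕ → ℂ,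
      (∃ C : ℝ, ∀ n, ‖y n‖ ≤ C) ∧
      (∃ L : ℝ, ∀ j k : ℕ,
        ‖y j - y k‖ ≤ L * |Real.sqrt j - Real.sqrt k|) ∧
      (∃ c : ℝ, c < ε ∧ ∀ n, ‖σ n - y n‖ ≤ c) := by
  intro ε hε
  obtain ⟨M, hM⟩ := hbdd
  obtain ⟨δ, hδ, hσδ⟩ := huc (ε / 3) (by positivity)
  -- shadows the usual metric on `ℕ`: from here on `dist j k` is `ρ(j, k)` by definition
  let _ : PseudoMetricSpace ℕ := .induced (fun n => Real.sqrt n) inferInstance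
  obtain ⟨K, hK⟩ := exists_dist_le_add_mul_of_forall_dist_le (f := σ) (D := 2 * M) hδ
    (fun j k => (dist_le_norm_add_norm (σ j) (σ k)).trans (by linarith [hM j, hM k]))
    (fun j k hjk => (dist_eq_norm (σ j) (σ k)).trans_le (hσδ j k hjk).le)
  obtain ⟨y, hy, hσy⟩ := Complex.exists_lipschitzWith_norm_sub_le_of_dist_le_add_mul hK
  refine ⟨y, ⟨M + 2 * (ε / 3), fun n => ?_⟩, ⟨2 * K, fun j k => ?_⟩,
    ⟨2 * (ε / 3), by linarith, hσy⟩⟩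
  · linarith [norm_le_norm_add_norm_sub' (y n) (σ n), norm_sub_rev (σ n) (y n), hM n, hσy n]
  · have := hy.dist_le_mul j k
    rw [dist_eq_norm, NNReal.coe_mul, NNReal.coe_ofNat] at this
    exact this
end

section
/- For all natural numbers j, k: (1/√6)·|√j - √k| ≤ |√(j+1) - √(k+1)| ≤ |√j - √k|. -/
private lemma sqrt_aux_126 : 1 + Real.sqrt 2 ≤ Real.sqrt 6 := by
  have h2 : Real.sqrt 2 ^ 2 = 2 := Real.sq_sqrt (by norm_num)
  have h6 : Real.sqrt 6 ^ 2 = 6 := Real.sq_sqrt (by norm_num)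
  have h32 : Real.sqrt 2 ≤ 3/2 := by
    nlinarith [h2, Real.sqrt_nonneg 2]
  nlinarith [h2, h6, Real.sqrt_nonneg 2, Real.sqrt_nonneg 6, h32]

private lemma sqrt_aux_2le6 : Real.sqrt 2 ≤ Real.sqrt 6 :=
  Real.sqrt_le_sqrt (by norm_num)

private lemma sqrt_aux_pos6 : 0 < Real.sqrt 6 := Real.sqrt_pos.mpr (by norm_num)

private lemma aux_upper (a b a' b' : ℝ) (ha : 0 ≤ a) (hb : 0 ≤ b)
    (haa' : a ≤ a') (hbb' : b ≤ b') (hab : a ≤ b) (hab' : a' ≤ b') (ha'1 : 1 ≤ a')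
    (e1 : (a' - a) * (a' + a) = 1) (e2 : (b' - b) * (b' + b) = 1) :
    b' - a' ≤ b - a := by
  have h1 : 0 < a' + a := by linarith
  have h2 : 0 < b' + b := by linarith
  have f1 : a' - a = 1 / (a' + a) := by field_simp; linarith [e1]
  have f2 : b' - b = 1 / (b' + b) := by field_simp; linarith [e2]
  have : b' - b ≤ a' - a := by
    rw [f1, f2]
    exact one_div_le_one_div_of_le h1 (by linarith)
  linarith

private lemma aux_lower (a b a' b' s : ℝ) (hba' : 0 ≤ b' - a') (hab1 : 1 ≤ a + b)
    (hprod : (b - a) * (a + b) = (b' - a') * (a' + b'))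
    (hsum : a' + b' ≤ s * (a + b)) : b - a ≤ s * (b' - a') := by
  have h0 : (0:ℝ) < a + b := by linarith
  have h1 : (b - a) * (a + b) ≤ (s * (b' - a')) * (a + b) := by
    calc (b - a) * (a + b) = (b' - a') * (a' + b') := hprod
    _ ≤ (b' - a') * (s * (a + b)) := mul_le_mul_of_nonneg_left hsum hba'
    _ = (s * (b' - a')) * (a + b) := by ring
  exact le_of_mul_le_mul_right h1 h0

theorem sqrt_dist_shift_ineq (j k : ℕ) :
    (1 / Real.sqrt 6) * |Real.sqrt j - Real.sqrt k| ≤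
      |Real.sqrt (j + 1) - Real.sqrt (k + 1)| ∧
    |Real.sqrt (j + 1) - Real.sqrt (k + 1)| ≤ |Real.sqrt j - Real.sqrt k| := by
  wlog h : j ≤ k with H
  · rw [abs_sub_comm (Real.sqrt j), abs_sub_comm (Real.sqrt (j+1))]
    exact H k j (le_of_not_ge h)
  rcases eq_or_lt_of_le h with rfl | hlt
  · simp [Real.sqrt_nonneg]
  have ha : 0 ≤ Real.sqrt j := Real.sqrt_nonneg _
  have hb : 0 ≤ Real.sqrt k := Real.sqrt_nonneg _
  have ha2 : Real.sqrt j ^ 2 = j := Real.sq_sqrt (by positivity)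
  have hb2 : Real.sqrt k ^ 2 = k := Real.sq_sqrt (by positivity)
  have ha'2 : Real.sqrt ((j:ℝ)+1) ^ 2 = (j : ℝ) + 1 := Real.sq_sqrt (by positivity)
  have hb'2 : Real.sqrt ((k:ℝ)+1) ^ 2 = (k : ℝ) + 1 := Real.sq_sqrt (by positivity)
  have hjk : (j : ℝ) < k := by exact_mod_cast hlt
  have hk1 : (1 : ℝ) ≤ k := by
    have : 1 ≤ k := Nat.one_le_iff_ne_zero.mpr (by omega)
    exact_mod_cast this
  have hab : Real.sqrt j ≤ Real.sqrt k := Real.sqrt_le_sqrt hjk.le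
  have hab' : Real.sqrt ((j:ℝ)+1) ≤ Real.sqrt ((k:ℝ)+1) := Real.sqrt_le_sqrt (by linarith)
  have haa' : Real.sqrt j ≤ Real.sqrt ((j:ℝ)+1) :=
    Real.sqrt_le_sqrt (by linarith [Nat.cast_nonneg (α := ℝ) j])
  have hbb' : Real.sqrt k ≤ Real.sqrt ((k:ℝ)+1) := Real.sqrt_le_sqrt (by linarith)
  have hb1 : 1 ≤ Real.sqrt k := by
    have := Real.sqrt_le_sqrt hk1
    rwa [Real.sqrt_one] at this
  have ha'1 : 1 ≤ Real.sqrt ((j:ℝ)+1) := by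
    have := Real.sqrt_le_sqrt
      (show (1:ℝ) ≤ (j:ℝ)+1 by linarith [Nat.cast_nonneg (α := ℝ) j])
    rwa [Real.sqrt_one] at this
  rw [abs_sub_comm (Real.sqrt j), abs_sub_comm (Real.sqrt (j+1)),
    abs_of_nonneg (sub_nonneg.2 hab), abs_of_nonneg (sub_nonneg.2 hab')]
  have hprod : (Real.sqrt k - Real.sqrt j) * (Real.sqrt j + Real.sqrt k)
      = (Real.sqrt ((k:ℝ)+1) - Real.sqrt ((j:ℝ)+1))
        * (Real.sqrt ((j:ℝ)+1) + Real.sqrt ((k:ℝ)+1)) := by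
    have h1 : (Real.sqrt k - Real.sqrt j) * (Real.sqrt j + Real.sqrt k)
        = Real.sqrt k ^ 2 - Real.sqrt j ^ 2 := by ring
    have h2 : (Real.sqrt ((k:ℝ)+1) - Real.sqrt ((j:ℝ)+1))
        * (Real.sqrt ((j:ℝ)+1) + Real.sqrt ((k:ℝ)+1))
        = Real.sqrt ((k:ℝ)+1) ^ 2 - Real.sqrt ((j:ℝ)+1) ^ 2 := by ring
    rw [h1, h2, ha2, hb2, ha'2, hb'2]; ring
  constructor
  · -- lower bound
    have hsum : Real.sqrt ((j:ℝ)+1) + Real.sqrt ((k:ℝ)+1)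
        ≤ Real.sqrt 6 * (Real.sqrt j + Real.sqrt k) := by
      have hbt : Real.sqrt ((k:ℝ)+1) ≤ Real.sqrt 2 * Real.sqrt k := by
        rw [← Real.sqrt_mul (by norm_num)]
        exact Real.sqrt_le_sqrt (by linarith)
      rcases Nat.eq_zero_or_pos j with rfl | hj
      · have ha0 : Real.sqrt ((0:ℕ):ℝ) = 0 := by simp
        have ha'one : Real.sqrt (((0:ℕ):ℝ)+1) = 1 := by norm_num
        rw [ha0, ha'one]
        have h6 := sqrt_aux_126
        have := mul_le_mul_of_nonneg_right h6 hb
        have h2b := mul_le_mul_of_nonneg_left hb1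
          (sub_nonneg.2 sqrt_aux_126)
        nlinarith [Real.sqrt_nonneg 2]
      · have hj1 : (1 : ℝ) ≤ j := by exact_mod_cast hj
        have hat : Real.sqrt ((j:ℝ)+1) ≤ Real.sqrt 2 * Real.sqrt j := by
          rw [← Real.sqrt_mul (by norm_num)]
          exact Real.sqrt_le_sqrt (by linarith)
        have hts := mul_le_mul_of_nonneg_right sqrt_aux_2le6
          (by linarith : (0:ℝ) ≤ Real.sqrt j + Real.sqrt k)
        nlinarith
    have key := aux_lower (Real.sqrt j) (Real.sqrt k) (Real.sqrt ((j:ℝ)+1))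
      (Real.sqrt ((k:ℝ)+1)) (Real.sqrt 6) (sub_nonneg.2 hab') (by linarith) hprod hsum
    rw [div_mul_eq_mul_div, one_mul, div_le_iff₀ sqrt_aux_pos6]
    linarith [key]
  · -- upper bound
    have e1 : (Real.sqrt ((j:ℝ)+1) - Real.sqrt j) * (Real.sqrt ((j:ℝ)+1) + Real.sqrt j) = 1 := by
      have h : (Real.sqrt ((j:ℝ)+1) - Real.sqrt j) * (Real.sqrt ((j:ℝ)+1) + Real.sqrt j)
          = Real.sqrt ((j:ℝ)+1) ^ 2 - Real.sqrt j ^ 2 := by ring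
      rw [h, ha2, ha'2]; ring
    have e2 : (Real.sqrt ((k:ℝ)+1) - Real.sqrt k) * (Real.sqrt ((k:ℝ)+1) + Real.sqrt k) = 1 := by
      have h : (Real.sqrt ((k:ℝ)+1) - Real.sqrt k) * (Real.sqrt ((k:ℝ)+1) + Real.sqrt k)
          = Real.sqrt ((k:ℝ)+1) ^ 2 - Real.sqrt k ^ 2 := by ring
      rw [h, hb2, hb'2]; ring
    exact aux_upper (Real.sqrt j) (Real.sqrt k) (Real.sqrt ((j:ℝ)+1))
      (Real.sqrt ((k:ℝ)+1)) ha hb haa' hbb' hab hab' ha'1 e1 e2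
end

section
/- A bounded sequence σ : ℕ → ℂ is uniformly continuous with respect to the sqrt-distance ρ(j,k) = |√j - √k| if and only if its right shift τ_R σ, defined by (τ_R σ)(0) = 0 and (τ_R σ)(j) = σ(j-1) for j ≥ 1, is uniformly continuous with respect to ρ. -/
/-!
On `ℕ` the point `0` is at sqrt-distance at least `1` from every other point, so the value of a
sequence at `0` is irrelevant for uniform continuity, and `τ_R σ` is uniformly continuous for `ρ`
exactly when `σ` is uniformly continuous for the shifted distance `ρ(j + 1, k + 1)`. The shifted
distance is uniformly equivalent to `ρ`: both satisfy `ρ(x, y) (√x + √y) = |x - y|`, so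
`ρ(j + 1, k + 1) ≤ ρ(j, k) ≤ 3 ρ(j + 1, k + 1)`.
-/

namespace Real

theorem sqrt_add_le_sqrt_add_sqrt {x y : ℝ} (hx : 0 ≤ x) (hy : 0 ≤ y) : √(x + y) ≤ √x + √y :=
  sqrt_le_iff.mpr ⟨by positivity, by
    nlinarith [sq_sqrt hx, sq_sqrt hy, mul_nonneg (sqrt_nonneg x) (sqrt_nonneg y)]⟩

theorem abs_sqrt_sub_sqrt_mul_sqrt_add_sqrt {x y : ℝ} (hx : 0 ≤ x) (hy : 0 ≤ y) :
    |√x - √y| * (√x + √y) = |x - y| := by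
  rw [← abs_of_nonneg (add_nonneg (sqrt_nonneg x) (sqrt_nonneg y)), ← abs_mul]
  congr 1
  linear_combination sq_sqrt hx - sq_sqrt hy

theorem abs_sqrt_add_sub_sqrt_add_le {x y t : ℝ} (hx : 0 ≤ x) (hy : 0 ≤ y) (ht : 0 ≤ t) :
    |√(x + t) - √(y + t)| ≤ |√x - √y| := by
  by_cases hxy : x = y
  · simp [hxy]
  have key := abs_sqrt_sub_sqrt_mul_sqrt_add_sqrt (add_nonneg hx ht) (add_nonneg hy ht)
  rw [add_sub_add_right_eq_sub, ← abs_sqrt_sub_sqrt_mul_sqrt_add_sqrt hx hy] at key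
  have hpos : 0 < √(x + t) + √(y + t) := by
    refine pos_of_mul_pos_right (a := |√(x + t) - √(y + t)|) ?_ (abs_nonneg _)
    rw [key, abs_sqrt_sub_sqrt_mul_sqrt_add_sqrt hx hy]
    exact abs_pos.mpr (sub_ne_zero.mpr hxy)
  have hsum : √x + √y ≤ √(x + t) + √(y + t) :=
    add_le_add (sqrt_le_sqrt (by linarith)) (sqrt_le_sqrt (by linarith))
  refine le_of_mul_le_mul_right ?_ hpos
  rw [key]
  exact mul_le_mul_of_nonneg_left hsum (abs_nonneg _)

theorem abs_sqrt_sub_sqrt_le_three_mul {x y t : ℝ} (hx : 0 ≤ x) (hy : 0 ≤ y) (ht : 0 ≤ t)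
    (htxy : t ≤ x + y) : |√x - √y| ≤ 3 * |√(x + t) - √(y + t)| := by
  by_cases hxy : x = y
  · simp [hxy]
  have key := abs_sqrt_sub_sqrt_mul_sqrt_add_sqrt (add_nonneg hx ht) (add_nonneg hy ht)
  rw [add_sub_add_right_eq_sub, ← abs_sqrt_sub_sqrt_mul_sqrt_add_sqrt hx hy] at key
  have hpos : 0 < √x + √y := by
    refine pos_of_mul_pos_right (a := |√x - √y|) ?_ (abs_nonneg _)
    rw [abs_sqrt_sub_sqrt_mul_sqrt_add_sqrt hx hy]
    exact abs_pos.mpr (sub_ne_zero.mpr hxy)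
  have hsqrt_t : √t ≤ √x + √y :=
    (sqrt_le_sqrt htxy).trans (sqrt_add_le_sqrt_add_sqrt hx hy)
  have hsum : √(x + t) + √(y + t) ≤ 3 * (√x + √y) := by
    linarith [sqrt_add_le_sqrt_add_sqrt hx ht, sqrt_add_le_sqrt_add_sqrt hy ht]
  refine le_of_mul_le_mul_right ?_ hpos
  calc |√x - √y| * (√x + √y) = |√(x + t) - √(y + t)| * (√(x + t) + √(y + t)) := key.symm
    _ ≤ |√(x + t) - √(y + t)| * (3 * (√x + √y)) := mul_le_mul_of_nonneg_left hsum (abs_nonneg _)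
    _ = 3 * |√(x + t) - √(y + t)| * (√x + √y) := by ring

end Real

def UniformContinuousWrt {α E : Type*} [SeminormedAddCommGroup E] (d : α → α → ℝ)
    (f : α → E) : Prop :=
  ∀ ε > 0, ∃ δ > 0, ∀ x y, d x y ≤ δ → ‖f x - f y‖ < ε

theorem UniformContinuousWrt.of_le_mul {α E : Type*} [SeminormedAddCommGroup E]
    {d d' : α → α → ℝ} {f : α → E} {C : ℝ} (hC : 0 < C) (h : ∀ x y, d x y ≤ C * d' x y)
    (hf : UniformContinuousWrt d f) : UniformContinuousWrt d' f := by
  intro ε hε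
  obtain ⟨δ, hδ, H⟩ := hf ε hε
  refine ⟨δ / C, div_pos hδ hC, fun x y hxy => H x y ((h x y).trans ?_)⟩
  rwa [le_div_iff₀' hC] at hxy

theorem uniformContinuousWrt_iff_comp_succ {E : Type*} [SeminormedAddCommGroup E]
    {d : ℕ → ℕ → ℝ} {r : ℝ} (hr : 0 < r) (hd₀ : ∀ k, r ≤ d 0 (k + 1))
    (hd₀' : ∀ k, r ≤ d (k + 1) 0) (f : ℕ → E) :
    UniformContinuousWrt d f ↔
      UniformContinuousWrt (fun j k => d (j + 1) (k + 1)) (fun j => f (j + 1)) := by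
  refine ⟨fun hf ε hε => ?_, fun hf ε hε => ?_⟩
  · obtain ⟨δ, hδ, H⟩ := hf ε hε
    exact ⟨δ, hδ, fun j k => H (j + 1) (k + 1)⟩
  · obtain ⟨δ, hδ, H⟩ := hf ε hε
    refine ⟨min δ (r / 2), by positivity, fun j k hjk => ?_⟩
    have hjk' : d j k < r := hjk.trans_lt ((min_le_right _ _).trans_lt (half_lt_self hr))
    rcases j with _ | j <;> rcases k with _ | k
    · simpa using hε
    · exact absurd (hd₀ k) hjk'.not_ge
    · exact absurd (hd₀' j) hjk'.not_ge
    · exact H j k (hjk.trans (min_le_left _ _))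

noncomputable def sqrtDist (j k : ℕ) : ℝ := |√(j : ℝ) - √(k : ℝ)|

theorem sqrtDist_succ_le (j k : ℕ) : sqrtDist (j + 1) (k + 1) ≤ sqrtDist j k := by
  simpa [sqrtDist] using
    Real.abs_sqrt_add_sub_sqrt_add_le (Nat.cast_nonneg j) (Nat.cast_nonneg k) zero_le_one

theorem sqrtDist_le_three_mul_sqrtDist_succ (j k : ℕ) :
    sqrtDist j k ≤ 3 * sqrtDist (j + 1) (k + 1) := by
  rcases Nat.eq_zero_or_pos (j + k) with hjk | hjk
  · obtain ⟨rfl, rfl⟩ : j = 0 ∧ k = 0 := by omega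
    simp [sqrtDist]
  · simpa [sqrtDist] using Real.abs_sqrt_sub_sqrt_le_three_mul (Nat.cast_nonneg j)
      (Nat.cast_nonneg k) zero_le_one (by exact_mod_cast hjk)

theorem one_le_sqrtDist_zero_succ (k : ℕ) : 1 ≤ sqrtDist 0 (k + 1) := by
  simp [sqrtDist, abs_of_nonneg (Real.sqrt_nonneg _)]

theorem one_le_sqrtDist_succ_zero (k : ℕ) : 1 ≤ sqrtDist (k + 1) 0 := by
  simp [sqrtDist, abs_of_nonneg (Real.sqrt_nonneg _)]

theorem uniformContinuousWrt_sqrtDist_iff_succ {E : Type*} [SeminormedAddCommGroup E]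
    (f : ℕ → E) :
    UniformContinuousWrt sqrtDist f ↔
      UniformContinuousWrt (fun j k => sqrtDist (j + 1) (k + 1)) f :=
  ⟨.of_le_mul three_pos sqrtDist_le_three_mul_sqrtDist_succ,
    .of_le_mul one_pos fun j k => by simpa using sqrtDist_succ_le j k⟩

def rightShift {E : Type*} [Zero E] (f : ℕ → E) (j : ℕ) : E := if j = 0 then 0 else f (j - 1)

theorem unif_cont_iff_right_shift_general (σ : ℕ → ℂ) :
    (∀ ε > 0, ∃ δ > 0, ∀ j k : ℕ,
      |Real.sqrt j - Real.sqrt k| ≤ δ → ‖σ j - σ k‖ < ε) ↔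
    (∀ ε > 0, ∃ δ > 0, ∀ j k : ℕ,
      |Real.sqrt j - Real.sqrt k| ≤ δ →
        ‖(if j = 0 then 0 else σ (j - 1)) -
          (if k = 0 then 0 else σ (k - 1))‖ < ε) := by
  change UniformContinuousWrt sqrtDist σ ↔ UniformContinuousWrt sqrtDist (rightShift σ)
  rw [uniformContinuousWrt_iff_comp_succ one_pos one_le_sqrtDist_zero_succ
    one_le_sqrtDist_succ_zero (rightShift σ)]
  -- `fun j => rightShift σ (j + 1)` is `σ` by definitional unfolding
  exact uniformContinuousWrt_sqrtDist_iff_succ σ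

theorem unif_cont_iff_right_shift (σ : ℕ → ℂ)
    (hbdd : ∃ M : ℝ, ∀ n, ‖σ n‖ ≤ M) :
    (∀ ε > 0, ∃ δ > 0, ∀ j k : ℕ,
      |Real.sqrt j - Real.sqrt k| ≤ δ → ‖σ j - σ k‖ < ε) ↔
    (∀ ε > 0, ∃ δ > 0, ∀ j k : ℕ,
      |Real.sqrt j - Real.sqrt k| ≤ δ →
        ‖(if j = 0 then 0 else σ (j - 1)) -
          (if k = 0 then 0 else σ (k - 1))‖ < ε) :=
  unif_cont_iff_right_shift_general σ
end

section
/- Let g ∈ L_∞([0,∞)) and define γ_g(n) = (1/n!) ∫₀^∞ g(√r)·e^{-r}·r^n dr for n ∈ ℕ. If there exists p ∈ ℕ such that γ_g(n) = 0 for all n ≥ p, then g = 0 almost everywhere on [0,∞). -/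
/-!
Put `f r = g (√r) e^{-r} r^p` for `r > 0` and `f = 0` elsewhere. The hypothesis says that every
moment `∫ rⁿ f r dr` vanishes, and the bound on `g` gives `|f r| ≤ M rᵖ e^{-r}`, so `e^{|r|/2} f`
is integrable. The positive and negative parts of `Re f` (and of `Im f`) are then densities of two
finite measures with exponential moments and equal moments. Their complex moment generating
functions are holomorphic on a vertical strip around the imaginary axis and have the same Taylor
coefficients at `0`, so they agree on the strip; in particular the two measures have the same
characteristic function and coincide. Hence `f = 0` a.e., and `g = 0` a.e. because `r ↦ √r`
and its inverse map null subsets of `(0, ∞)` to null sets.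
-/

open MeasureTheory ProbabilityTheory Set Complex
open scoped Nat

theorem DifferentiableOn.eqOn_of_iteratedDeriv_eq {E : Type*} [NormedAddCommGroup E]
    [NormedSpace ℂ E] [CompleteSpace E] {f g : ℂ → E} {U : Set ℂ}
    (hf : DifferentiableOn ℂ f U) (hg : DifferentiableOn ℂ g U) (hU : IsOpen U)
    (hU' : IsPreconnected U) {c : ℂ} (hc : c ∈ U)
    (h : ∀ n, iteratedDeriv n f c = iteratedDeriv n g c) : EqOn f g U := by
  obtain ⟨r, hr, hball⟩ := Metric.isOpen_iff.mp hU c hc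
  refine (hf.analyticOnNhd hU).eqOn_of_preconnected_of_eventuallyEq (hg.analyticOnNhd hU) hU' hc
    (Filter.eventually_of_mem (Metric.ball_mem_nhds c hr) fun z hz => ?_)
  refine (hasSum_taylorSeries_on_ball (hf.mono hball) hz).unique ?_
  simpa only [h] using hasSum_taylorSeries_on_ball (hg.mono hball) hz

theorem MeasureTheory.Measure.ext_of_moments {μ ν : Measure ℝ} [IsFiniteMeasure μ]
    [IsFiniteMeasure ν] (hμ : 0 ∈ interior (integrableExpSet id μ))
    (hν : 0 ∈ interior (integrableExpSet id ν))
    (h : ∀ n : ℕ, ∫ x, x ^ n ∂μ = ∫ x, x ^ n ∂ν) : μ = ν := by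
  set S : Set ℂ := re ⁻¹' (interior (integrableExpSet id μ) ∩ interior (integrableExpSet id ν))
  have hS : IsOpen S := (isOpen_interior.inter isOpen_interior).preimage continuous_re
  have hS' : IsPreconnected S :=
    ((convex_integrableExpSet.interior.inter convex_integrableExpSet.interior).linear_preimage
      reLm).isPreconnected
  have heq : EqOn (complexMGF id μ) (complexMGF id ν) S := by
    refine DifferentiableOn.eqOn_of_iteratedDeriv_eq
      (differentiableOn_complexMGF.mono fun z hz => hz.1)
      (differentiableOn_complexMGF.mono fun z hz => hz.2) hS hS' (c := 0) ⟨hμ, hν⟩ fun n => ?_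
    rw [iteratedDeriv_complexMGF (by simpa using hμ), iteratedDeriv_complexMGF (by simpa using hν)]
    simp only [id_eq, zero_mul, Complex.exp_zero, mul_one, ← ofReal_pow, integral_complex_ofReal,
      h n]
  refine Measure.ext_of_charFun (funext fun t => ?_)
  rw [← complexMGF_id_mul_I, ← complexMGF_id_mul_I]
  exact heq (by simpa [S] using ⟨hμ, hν⟩)

theorem MeasureTheory.Integrable.pow_smul_of_exp_mul_abs_smul {E : Type*} [NormedAddCommGroup E]
    [NormedSpace ℝ E] {f : ℝ → E} {a : ℝ} (ha : 0 < a)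
    (hf : Integrable (fun x => Real.exp (a * |x|) • f x)) (n : ℕ) :
    Integrable (fun x => x ^ n • f x) := by
  have hmeas : AEStronglyMeasurable f :=
    ((by fun_prop : Continuous fun x : ℝ => Real.exp (-(a * |x|))).aestronglyMeasurable.smul
      hf.aestronglyMeasurable).congr (ae_of_all _ fun x => by simp [smul_smul, ← Real.exp_add])
  refine (hf.norm.const_mul (n ! / a ^ n)).mono' (by fun_prop) (ae_of_all _ fun x => ?_)
  have hpow : |x| ^ n ≤ n ! / a ^ n * Real.exp (a * |x|) := by
    have := Real.pow_div_factorial_le_exp (x := a * |x|) (mul_nonneg ha.le (abs_nonneg x)) n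
    rw [mul_pow, div_le_iff₀ (by positivity)] at this
    rw [div_mul_eq_mul_div, le_div_iff₀ (by positivity)]
    linarith
  rw [norm_smul, norm_smul, norm_pow, Real.norm_eq_abs, Real.norm_of_nonneg (Real.exp_pos _).le,
    ← mul_assoc]
  exact mul_le_mul_of_nonneg_right hpow (norm_nonneg _)

theorem integral_pow_withDensity_ofReal {k : ℝ → ℝ} (hk : AEMeasurable k) (n : ℕ) :
    ∫ x, x ^ n ∂(volume.withDensity fun x => ENNReal.ofReal (k x)) = ∫ x, x ^ n * max (k x) 0 := by
  rw [integral_withDensity_eq_integral_toReal_smul₀ hk.ennreal_ofReal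
    (ae_of_all _ fun _ => ENNReal.ofReal_lt_top)]
  simp only [ENNReal.toReal_ofReal', smul_eq_mul, mul_comm]

theorem zero_mem_interior_integrableExpSet_withDensity_ofReal {k : ℝ → ℝ} {a : ℝ} (ha : 0 < a)
    (hk : Integrable (fun x => Real.exp (a * |x|) * k x)) :
    0 ∈ interior (integrableExpSet id (volume.withDensity fun x => ENNReal.ofReal (k x))) := by
  have hk_int : Integrable k := by simpa using hk.pow_smul_of_exp_mul_abs_smul ha 0
  refine mem_interior_iff_mem_nhds.mpr (Filter.mem_of_superset (Ioo_mem_nhds (neg_neg_of_pos ha) ha)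
    fun t ht => ?_)
  rw [integrableExpSet, mem_ofPred_eq, integrable_withDensity_iff_integrable_smul₀'
    hk_int.aemeasurable.ennreal_ofReal (ae_of_all _ fun _ => ENNReal.ofReal_lt_top)]
  simp_rw [ENNReal.toReal_ofReal', id]
  have := hk_int.aestronglyMeasurable
  refine hk.norm.mono' (by fun_prop) (ae_of_all _ fun x => ?_)
  have hexp : Real.exp (t * x) ≤ Real.exp (a * |x|) :=
    Real.exp_le_exp.mpr ((le_abs_self _).trans (by
      rw [abs_mul]; exact mul_le_mul_of_nonneg_right (abs_lt.mpr ht).le (abs_nonneg x)))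
  rw [norm_smul, norm_mul, Real.norm_of_nonneg (le_max_right _ _),
    Real.norm_of_nonneg (Real.exp_pos _).le, Real.norm_of_nonneg (Real.exp_pos _).le, mul_comm]
  exact mul_le_mul hexp (max_le (le_abs_self _) (abs_nonneg _)) (le_max_right _ _)
    (Real.exp_pos _).le

theorem MeasureTheory.Integrable.pow_mul_max_zero {k : ℝ → ℝ} {n : ℕ}
    (hk : Integrable (fun x => x ^ n * k x)) (hk' : AEStronglyMeasurable k) :
    Integrable (fun x => x ^ n * max (k x) 0) :=
  hk.mono (by fun_prop) (ae_of_all _ fun x => by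
    rw [norm_mul, norm_mul, Real.norm_of_nonneg (le_max_right _ _), Real.norm_eq_abs (k x)]
    gcongr
    exact max_le (le_abs_self _) (abs_nonneg _))

theorem Real.ae_eq_zero_of_forall_integral_pow_mul_eq_zero {h : ℝ → ℝ} {a : ℝ} (ha : 0 < a)
    (hint : Integrable (fun x => Real.exp (a * |x|) * h x))
    (hmom : ∀ n : ℕ, ∫ x, x ^ n * h x = 0) : h =ᵐ[volume] 0 := by
  have hint_neg : Integrable (fun x => Real.exp (a * |x|) * -h x) := by simpa using hint.neg
  have hh : Integrable h := by simpa using hint.pow_smul_of_exp_mul_abs_smul ha 0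
  have := isFiniteMeasure_withDensity_ofReal hh.2
  have := isFiniteMeasure_withDensity_ofReal hh.neg.2
  have hpos_eq_neg := Measure.ext_of_moments
    (zero_mem_interior_integrableExpSet_withDensity_ofReal ha hint)
    (zero_mem_interior_integrableExpSet_withDensity_ofReal ha hint_neg) fun n => by
      have hpow : Integrable (fun x => x ^ n * h x) := hint.pow_smul_of_exp_mul_abs_smul ha n
      have hpow_neg : Integrable (fun x => x ^ n * -h x) := by simpa using hpow.neg
      rw [integral_pow_withDensity_ofReal hh.aemeasurable,
        integral_pow_withDensity_ofReal (k := fun x => -h x) hh.neg.aemeasurable, ← sub_eq_zero,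
        ← integral_sub (hpow.pow_mul_max_zero hh.aestronglyMeasurable)
          (hpow_neg.pow_mul_max_zero hh.neg.aestronglyMeasurable)]
      simpa [← mul_sub, max_zero_sub_max_neg_zero_eq_self] using hmom n
  filter_upwards [(withDensity_eq_iff_of_sigmaFinite hh.aemeasurable.ennreal_ofReal
    hh.neg.aemeasurable.ennreal_ofReal).mp hpos_eq_neg] with x hx
  have hx' := congrArg ENNReal.toReal hx
  rw [ENNReal.toReal_ofReal', ENNReal.toReal_ofReal', Pi.neg_apply] at hx'
  rw [Pi.zero_apply, ← max_zero_sub_max_neg_zero_eq_self (h x), hx', sub_self]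

theorem Complex.ae_eq_zero_of_forall_integral_pow_mul_eq_zero {f : ℝ → ℂ} {a : ℝ} (ha : 0 < a)
    (hint : Integrable (fun x => Real.exp (a * |x|) • f x))
    (hmom : ∀ n : ℕ, ∫ x : ℝ, (x : ℂ) ^ n * f x = 0) : f =ᵐ[volume] 0 := by
  have hpow (n : ℕ) : Integrable (fun x : ℝ => (x : ℂ) ^ n * f x) := by
    simpa [Complex.real_smul] using hint.pow_smul_of_exp_mul_abs_smul ha n
  have hre := Real.ae_eq_zero_of_forall_integral_pow_mul_eq_zero ha (h := fun x => (f x).re)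
    (by simpa only [RCLike.re_to_complex, Complex.smul_re, smul_eq_mul] using hint.re) fun n => by
      have := congrArg Complex.re (hmom n)
      rw [← RCLike.re_to_complex, ← integral_re (hpow n)] at this
      simpa [← Complex.ofReal_pow] using this
  have him := Real.ae_eq_zero_of_forall_integral_pow_mul_eq_zero ha (h := fun x => (f x).im)
    (by simpa only [RCLike.im_to_complex, Complex.smul_im, smul_eq_mul] using hint.im) fun n => by
      have := congrArg Complex.im (hmom n)
      rw [← RCLike.im_to_complex, ← integral_im (hpow n)] at this
      simpa [← Complex.ofReal_pow] using this
  filter_upwards [hre, him] with x hxre hxim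
  exact Complex.ext hxre hxim

theorem ae_restrict_Ioi_comp_sqrt_iff {P : ℝ → Prop} :
    (∀ᵐ r ∂volume.restrict (Ioi 0), P (Real.sqrt r)) ↔ ∀ᵐ x ∂volume.restrict (Ioi 0), P x := by
  simp only [ae_restrict_iff' measurableSet_Ioi, ae_iff, Classical.not_imp]
  constructor
  · refine fun h => measure_mono_null ?_
      (addHaar_image_eq_zero_of_differentiableOn_of_addHaar_eq_zero volume (fun r hr =>
        (Real.hasDerivAt_sqrt (ne_of_gt hr.1)).differentiableAt.differentiableWithinAt) h)
    rintro x ⟨hx, hPx⟩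
    refine ⟨x ^ 2, ⟨mem_Ioi.mpr (pow_pos hx 2), ?_⟩, Real.sqrt_sq (le_of_lt hx)⟩
    rwa [Real.sqrt_sq (le_of_lt hx)]
  · refine fun h => measure_mono_null ?_
      (addHaar_image_eq_zero_of_differentiableOn_of_addHaar_eq_zero volume
        (differentiable_pow 2).differentiableOn h)
    rintro r ⟨hr, hPr⟩
    exact ⟨Real.sqrt r, ⟨Real.sqrt_pos.mpr hr, hPr⟩, Real.sq_sqrt (le_of_lt hr)⟩

theorem integrable_exp_mul_abs_smul_indicator_mul_exp_neg_mul_pow {f : ℝ → ℂ} {M a : ℝ}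
    (hf : AEStronglyMeasurable f (volume.restrict (Ioi 0)))
    (hM : ∀ᵐ r ∂volume.restrict (Ioi 0), ‖f r‖ ≤ M) (ha : a < 1) (p : ℕ) :
    Integrable (fun x => Real.exp (a * |x|) •
      (Ioi 0).indicator (fun r => f r * Real.exp (-r) * (r : ℂ) ^ p) x) := by
  rw [← indicator_smul, integrable_indicator_iff measurableSet_Ioi]
  have hdecay : Integrable (fun r : ℝ => M * (r ^ p * Real.exp (-(1 - a) * r)))
      (volume.restrict (Ioi 0)) := by
    simpa only [Real.rpow_natCast, Real.rpow_one] using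
      (integrableOn_rpow_mul_exp_neg_mul_rpow (s := p) (p := 1)
        (neg_one_lt_zero.trans_le p.cast_nonneg) one_pos (sub_pos.mpr ha)).const_mul M
  refine hdecay.mono' (by fun_prop) ?_
  filter_upwards [hM, self_mem_ae_restrict measurableSet_Ioi] with r hr hr0
  have hr0 : 0 < r := hr0
  rw [norm_smul, norm_mul, norm_mul, Complex.norm_real, norm_pow, Complex.norm_real,
    Real.norm_of_nonneg (Real.exp_pos _).le, Real.norm_of_nonneg (Real.exp_pos _).le,
    Real.norm_of_nonneg hr0.le, abs_of_pos hr0]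
  calc Real.exp (a * r) * (‖f r‖ * Real.exp (-r) * r ^ p)
      = ‖f r‖ * (r ^ p * Real.exp (-(1 - a) * r)) := by
        rw [show -(1 - a) * r = a * r + -r by ring, Real.exp_add]; ring
    _ ≤ M * (r ^ p * Real.exp (-(1 - a) * r)) := by gcongr

theorem radial_toeplitz_eigenvalues_eventually_zero_implies_symbol_zero
    (g : ℝ → ℂ) (hg : Measurable g) (M : ℝ)
    (hbdd : ∀ᵐ x ∂(volume.restrict (Set.Ici (0 : ℝ))), ‖g x‖ ≤ M)
    (p : ℕ)
    (hzero : ∀ n : ℕ, p ≤ n →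
      (1 / (Nat.factorial n : ℂ)) *
        ∫ r in Set.Ioi (0 : ℝ), g (Real.sqrt r) * Real.exp (-r) * (r : ℂ) ^ n = 0) :
    ∀ᵐ x ∂(volume.restrict (Set.Ici (0 : ℝ))), g x = 0 := by
  set c : ℝ → ℂ := (Ioi 0).indicator fun r => g (Real.sqrt r) * Real.exp (-r) * (r : ℂ) ^ p
  have hbound : ∀ᵐ r ∂volume.restrict (Ioi 0), ‖g (Real.sqrt r)‖ ≤ M :=
    ae_restrict_Ioi_comp_sqrt_iff.mpr
      (ae_restrict_of_ae_restrict_of_subset Ioi_subset_Ici_self hbdd)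
  have hint : Integrable (fun x => Real.exp (1 / 2 * |x|) • c x) :=
    integrable_exp_mul_abs_smul_indicator_mul_exp_neg_mul_pow
      (hg.comp Real.continuous_sqrt.measurable).aestronglyMeasurable hbound (by norm_num) p
  have hmom (n : ℕ) : ∫ x : ℝ, (x : ℂ) ^ n * c x = 0 := by
    have h := (mul_eq_zero.mp (hzero (p + n) (Nat.le_add_right p n))).resolve_left
      (by simp [Nat.factorial_ne_zero])
    rw [← h, ← integral_indicator measurableSet_Ioi]
    congr 1 with r
    by_cases hr : r ∈ Ioi 0
    · simp only [c, indicator_of_mem hr, pow_add]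
      ring
    · simp [c, indicator_of_notMem hr]
  have hc := Complex.ae_eq_zero_of_forall_integral_pow_mul_eq_zero one_half_pos hint hmom
  rw [Measure.restrict_congr_set Ioi_ae_eq_Ici.symm, ← ae_restrict_Ioi_comp_sqrt_iff]
  filter_upwards [ae_restrict_of_ae hc, self_mem_ae_restrict measurableSet_Ioi] with r hr hr0
  simpa [c, indicator_of_mem hr0, Real.exp_ne_zero, (mem_Ioi.mp hr0).ne'] using hr
end

section
/- Let m ∈ ℕ, ξ ∈ ℕ with ξ ≥ 2, and define a_{m,ξ}(x) = (-1)^m ξ^{m+1} e^{-(ξ-1)x²} L_m(ξ x²), where L_m is the m-th Laguerre polynomial. Then the eigenvalue sequence γ_{a_{m,ξ}}(n) = (1/n!) ∫₀^∞ a_{m,ξ}(√r) e^{-r} r^n dr satisfies γ_{a_{m,ξ}}(n) = 0 for n < m and γ_{a_{m,ξ}}(n) = C(n,m)·ξ^{-(n-m)} for n ≥ m. -/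
/-!
On `(0, ∞)` we have `√r ^ 2 = r`, so the integrand is `(-1)^m ξ^(m+1) L_m(ξ r) r^n e^{-ξ r}`.
Expanding `L_m` and integrating termwise with `∫₀^∞ r^N e^{-ξ r} dr = N! / ξ^(N+1)` gives
`γ(n) = (-1)^m ξ^(m-n) ∑_k (-1)^k C(m,k) C(n+k,k)`, and the alternating sum equals
`(-1)^m C(n,m)`: it is the coefficient of `X^n` in `(X+1)^n (1 - (X+1))^m = (-X)^m (X+1)^n`.
-/

open Finset MeasureTheory Polynomial Real Set
open scoped Nat

theorem sum_range_neg_one_pow_mul_choose_mul_add_choose (n m : ℕ) :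
    ∑ k ∈ range (m + 1), (-1 : ℤ) ^ k * m.choose k * (n + k).choose k
      = (-1) ^ m * n.choose m := by
  have hpoly : ∑ k ∈ range (m + 1), C ((-1 : ℤ) ^ k * m.choose k) * (X + 1) ^ (n + k)
      = C ((-1) ^ m) * ((X + 1) ^ n * X ^ m) := by
    calc _ = (-(X + 1) + 1 : ℤ[X]) ^ m * (X + 1) ^ n := by
          rw [add_pow, sum_mul]
          refine sum_congr rfl fun k _ ↦ ?_
          rw [neg_pow (X + 1 : ℤ[X])]
          simp only [map_mul, map_pow, map_neg, map_one, map_natCast]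
          ring
      _ = _ := by simp only [map_pow, map_neg, map_one]; ring
  have hcoeff := congrArg (coeff · n) hpoly
  simp only [finsetSum_coeff, coeff_C_mul, coeff_mul_X_pow', coeff_X_add_one_pow] at hcoeff
  simp only [← Nat.choose_symm_add, hcoeff]
  split_ifs with hmn
  · rw [Nat.choose_symm hmn]
  · rw [Nat.choose_eq_zero_of_lt (by omega), Nat.cast_zero, mul_zero]

theorem integrableOn_Ioi_pow_mul_exp_neg_mul (N : ℕ) {b : ℝ} (hb : 0 < b) :
    IntegrableOn (fun t : ℝ ↦ t ^ N * exp (-(b * t))) (Ioi 0) := by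
  simpa [rpow_natCast] using integrableOn_rpow_mul_exp_neg_mul_rpow (p := 1) (s := N)
    (neg_one_lt_zero.trans_le N.cast_nonneg) zero_lt_one hb

theorem integral_Ioi_pow_mul_exp_neg_mul (N : ℕ) {b : ℝ} (hb : 0 < b) :
    ∫ t in Ioi 0, t ^ N * exp (-(b * t)) = N ! / b ^ (N + 1) := by
  have h := integral_rpow_mul_exp_neg_mul_Ioi (a := N + 1) (by positivity) hb
  rw [add_sub_cancel_right, Gamma_nat_eq_factorial, ← Nat.cast_add_one] at h
  simp only [rpow_natCast] at h
  rw [h, div_pow, one_pow]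
  ring

noncomputable def laguerre (m : ℕ) (x : ℝ) : ℝ :=
  ∑ k ∈ range (m + 1), (-1) ^ k * (m.choose k : ℝ) * x ^ k / (k ! : ℝ)

theorem integral_Ioi_laguerre_mul_pow_mul_exp (m n : ℕ) {b : ℝ} (hb : 0 < b) :
    ∫ t in Ioi 0, laguerre m (b * t) * t ^ n * exp (-(b * t))
      = (-1) ^ m * n.choose m * n ! / b ^ (n + 1) := by
  have hexpand : ∀ t, laguerre m (b * t) * t ^ n * exp (-(b * t)) = ∑ k ∈ range (m + 1),
      (-1) ^ k * m.choose k * b ^ k / k ! * (t ^ (n + k) * exp (-(b * t))) := by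
    intro t
    simp only [laguerre, sum_mul]
    refine sum_congr rfl fun k _ ↦ ?_
    ring
  have hterm : ∀ k, (-1) ^ k * m.choose k * b ^ k / k ! * ((n + k)! / b ^ (n + k + 1))
      = n ! / b ^ (n + 1) * ((-1) ^ k * m.choose k * (n + k).choose k) := by
    intro k
    rw [← Nat.add_choose_mul_factorial_mul_factorial]
    push_cast
    field_simp
    ring
  simp_rw [hexpand]
  rw [integral_finsetSum _ fun k _ ↦
    (integrableOn_Ioi_pow_mul_exp_neg_mul (n + k) hb).const_mul _]
  simp_rw [integral_const_mul, integral_Ioi_pow_mul_exp_neg_mul _ hb, hterm, ← mul_sum]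
  have hsum := congrArg (Int.cast : ℤ → ℝ) (sum_range_neg_one_pow_mul_choose_mul_add_choose n m)
  push_cast at hsum
  rw [hsum]
  ring

theorem gamma_of_laguerre_symbol (m : ℕ) (ξ : ℕ) (hξ : 2 ≤ ξ) (n : ℕ) :
    (1 / (Nat.factorial n : ℝ)) *
      ∫ r in Set.Ioi (0 : ℝ),
        ((-1 : ℝ) ^ m * (ξ : ℝ) ^ (m + 1) *
            Real.exp (-((ξ : ℝ) - 1) * (Real.sqrt r) ^ 2) *
            ∑ k ∈ Finset.range (m + 1),
              (-1 : ℝ) ^ k * (Nat.choose m k : ℝ) *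
                ((ξ : ℝ) * (Real.sqrt r) ^ 2) ^ k / (Nat.factorial k : ℝ)) *
          Real.exp (-r) * r ^ n
    = if n < m then 0 else (Nat.choose n m : ℝ) / (ξ : ℝ) ^ (n - m) := by
  have hξ₀ : (0 : ℝ) < ξ := by exact_mod_cast (by omega : 0 < ξ)
  calc _ = 1 / n ! * ∫ r in Ioi 0,
        (-1) ^ m * (ξ : ℝ) ^ (m + 1) * (laguerre m (ξ * r) * r ^ n * exp (-(ξ * r))) := by
        congr 1
        refine setIntegral_congr_fun measurableSet_Ioi fun r hr ↦ ?_
        have hexp : exp (-((ξ : ℝ) - 1) * r) * exp (-r) = exp (-(ξ * r)) := by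
          rw [← exp_add]; ring_nf
        simp only [laguerre, sq_sqrt hr.le, ← hexp]
        ring
    _ = (n.choose m : ℝ) * ξ ^ m / ξ ^ n := by
        rw [integral_const_mul, integral_Ioi_laguerre_mul_pow_mul_exp m n hξ₀]
        have hsign : ((-1 : ℝ) ^ m) ^ 2 = 1 := by rw [← pow_mul, pow_mul']; norm_num
        field_simp
        linear_combination (n.choose m : ℝ) * ξ ^ (m + 1) * ξ ^ n * hsign
    _ = _ := by
        split_ifs with hnm
        · simp [Nat.choose_eq_zero_of_lt hnm]
        · rw [pow_sub₀ _ hξ₀.ne' (not_lt.mp hnm)]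
          field_simp
end

section
/- Let m ∈ ℕ and for each integer ξ ≥ max(2, ⌈(m+2)/2⌉), define the sequence f_ξ(n) = 0 for n < m and f_ξ(n) = C(n,m)·ξ^{-(n-m)} for n ≥ m. Then ‖f_ξ - δ_m‖_∞ = (m+1)/ξ, where δ_m is the sequence with δ_m(m) = 1 and δ_m(n) = 0 otherwise; in particular f_ξ converges uniformly to δ_m as ξ → ∞. -/
lemma choose_bound_aux (m ξ : ℕ) (hm : m + 2 ≤ 2 * ξ) :
    ∀ k : ℕ, Nat.choose (m + k + 1) m ≤ (m + 1) * ξ ^ k := by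
  intro k
  induction k with
  | zero => simp [Nat.choose_succ_self_right]
  | succ k ih =>
      -- C(m+k+2,m)*(k+2) = C(m+k+1,m)*(m+k+2)
      have key : Nat.choose (m + k + 1) m * (m + k + 2) =
          Nat.choose (m + k + 2) m * (k + 2) := by
        have := Nat.choose_mul_succ_eq (m + k + 1) m
        simpa [Nat.add_sub_cancel_left, show m + k + 1 + 1 - m = k + 2 by omega,
          show m + k + 1 + 1 = m + k + 2 by ring] using this
      have h1 : m + k + 2 ≤ ξ * (k + 2) := by nlinarith
      have h2 : Nat.choose (m + k + 2) m * (k + 2) ≤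
          (ξ * Nat.choose (m + k + 1) m) * (k + 2) := by
        calc Nat.choose (m + k + 2) m * (k + 2)
            = Nat.choose (m + k + 1) m * (m + k + 2) := key.symm
          _ ≤ Nat.choose (m + k + 1) m * (ξ * (k + 2)) :=
              Nat.mul_le_mul_left _ h1
          _ = (ξ * Nat.choose (m + k + 1) m) * (k + 2) := by ring
      have h3 : Nat.choose (m + k + 2) m ≤ ξ * Nat.choose (m + k + 1) m :=
        Nat.le_of_mul_le_mul_right h2 (by omega)
      calc Nat.choose (m + k + 2) m ≤ ξ * Nat.choose (m + k + 1) m := h3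
        _ ≤ ξ * ((m + 1) * ξ ^ k) := Nat.mul_le_mul_left _ ih
        _ = (m + 1) * ξ ^ (k + 1) := by ring

lemma sup_eq (m ξ : ℕ) (hξ : 2 ≤ ξ) (hm : m + 2 ≤ 2 * ξ) :
    (⨆ n : ℕ,
        |(if n < m then (0 : ℝ) else (Nat.choose n m : ℝ) / (ξ : ℝ) ^ (n - m)) -
          (if n = m then (1 : ℝ) else 0)|)
      = (m + 1) / (ξ : ℝ) := by
  have hξ0 : (0 : ℝ) < (ξ : ℝ) := by positivity
  set g : ℕ → ℝ := fun n =>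
    |(if n < m then (0 : ℝ) else (Nat.choose n m : ℝ) / (ξ : ℝ) ^ (n - m)) -
      (if n = m then (1 : ℝ) else 0)| with hg
  have hbound : ∀ n, g n ≤ (m + 1) / (ξ : ℝ) := by
    intro n
    rcases lt_trichotomy n m with h | h | h
    · simp [hg, h, h.ne]
      positivity
    · simp [hg, h]
      positivity
    · obtain ⟨k, rfl⟩ : ∃ k, n = m + k + 1 := ⟨n - m - 1, by omega⟩
      have h1 : ¬ (m + k + 1 < m) := by omega
      have h2 : m + k + 1 ≠ m := by omega
      have h3 : m + k + 1 - m = k + 1 := by omega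
      rw [hg]
      simp only [h1, h2, if_false, h3, sub_zero]
      rw [abs_of_nonneg (by positivity)]
      rw [div_le_div_iff₀ (by positivity) hξ0]
      have hb := choose_bound_aux m ξ hm k
      have hb' : (Nat.choose (m + k + 1) m : ℝ) ≤ (m + 1) * (ξ : ℝ) ^ k := by
        exact_mod_cast hb
      calc (Nat.choose (m + k + 1) m : ℝ) * (ξ : ℝ)
          ≤ ((m + 1) * (ξ : ℝ) ^ k) * (ξ : ℝ) := by
            apply mul_le_mul_of_nonneg_right hb' hξ0.le
        _ = ((m : ℝ) + 1) * (ξ : ℝ) ^ (k + 1) := by ring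
  have hval : g (m + 1) = (m + 1) / (ξ : ℝ) := by
    have h1 : ¬ (m + 1 < m) := by omega
    have h2 : m + 1 ≠ m := by omega
    simp only [hg, h1, h2, if_false, Nat.add_sub_cancel_left, pow_one, sub_zero]
    rw [abs_of_nonneg (by positivity), Nat.choose_succ_self_right]
    push_cast
    ring
  apply le_antisymm
  · exact ciSup_le hbound
  · rw [← hval]
    exact le_ciSup ⟨(m + 1) / (ξ : ℝ), fun x ⟨n, hn⟩ => hn ▸ hbound n⟩ (m + 1)

theorem sup_dist_f_xi_delta (m : ℕ) :
    (∀ ξ : ℕ, 2 ≤ ξ → m + 2 ≤ 2 * ξ →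
      (⨆ n : ℕ,
        |(if n < m then (0 : ℝ) else (Nat.choose n m : ℝ) / (ξ : ℝ) ^ (n - m)) -
          (if n = m then (1 : ℝ) else 0)|)
      = (m + 1) / (ξ : ℝ)) ∧
    Filter.Tendsto
      (fun ξ : ℕ =>
        ⨆ n : ℕ,
          |(if n < m then (0 : ℝ) else (Nat.choose n m : ℝ) / (ξ : ℝ) ^ (n - m)) -
            (if n = m then (1 : ℝ) else 0)|)
      Filter.atTop (nhds 0) := by
  constructor
  · intro ξ hξ hm
    exact sup_eq m ξ hξ hm
  · apply Filter.Tendsto.congr'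
      (f₁ := fun ξ : ℕ => ((m : ℝ) + 1) / (ξ : ℝ))
    · filter_upwards [Filter.eventually_ge_atTop (m + 2)] with ξ hξ
      exact (sup_eq m ξ (by omega) (by omega)).symm
    · exact tendsto_const_div_atTop_nhds_zero_nat _
end
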